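/- Let P ⊆ nA* be a finite joinless code and let R = P·(nA*) be the right ideal it generates. Then the following are equivalent: (1) R is an essential right ideal of nA*; (2) P is maximal as a joinless code; (3) P·nA^ω = nA^ω; (4) R·nA^ω = nA^ω. -/

import Mathlib

namespace BrinThompson

abbrev W (A : Type*) (n : ℕ) : Type _ := Fin n → List A

variable {A : Type*} {n : ℕ}

/-- Coordinatewise concatenation in `nA*`. -/
def cat (u x : W A n) : W A n := fun i => u i ++ x i

/-- `u ≤_init v` : `u` is an initial factor of `v`. -/
def initLE (u v : W A n) : Prop := ∃ x : W A n, v = cat u x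

/-- `w` is the join (least upper bound) of `u` and `v` w.r.t. `≤_init`. -/
def isJoin (u v w : W A n) : Prop :=
  initLE u w ∧ initLE v w ∧ ∀ z : W A n, initLE u z → initLE v z → initLE w z

/-- `u` and `v` have a join. -/
def HasJoin (u v : W A n) : Prop := ∃ w : W A n, isJoin u v w

/-- A joinless code: no two distinct elements have a join. -/
def JoinlessCode (S : Set (W A n)) : Prop :=
  ∀ u ∈ S, ∀ v ∈ S, u ≠ v → ¬ HasJoin u v

/-- A maximal joinless code: joinless, and every element of `nA*` has a join
with some element of the code. -/
def MaxJoinlessCode (S : Set (W A n)) : Prop :=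
  JoinlessCode S ∧ ∀ x : W A n, ∃ p ∈ S, HasJoin x p

/-- The right ideal `C · nA*` generated by `C`. -/
def genIdeal (C : Set (W A n)) : Set (W A n) := {w | ∃ c ∈ C, ∃ x : W A n, w = cat c x}

def IsRightIdeal (R : Set (W A n)) : Prop := genIdeal R = R

/-- An initial factor code: pairwise `≤_init`-incomparable set. -/
def InitFactorCode (S : Set (W A n)) : Prop :=
  ∀ u ∈ S, ∀ v ∈ S, initLE u v → u = v

/-- `A_{ε,n}`: tuples with one coordinate a single letter and the rest empty. -/
def Aeps (A : Type*) (n : ℕ) : Set (W A n) :=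
  {w | ∃ i : Fin n, ∃ a : A, w i = [a] ∧ ∀ j : Fin n, j ≠ i → w j = []}

/-- `(ε)^n`, the tuple of empty strings. -/
def epsn (A : Type*) (n : ℕ) : W A n := fun _ => []

/-- `nA^ω`: `n`-tuples of one-sided infinite sequences over `A`. -/
abbrev Winf (A : Type*) (n : ℕ) : Type _ := Fin n → ℕ → A

/-- Concatenation of a finite tuple `p ∈ nA*` with an infinite tuple `u ∈ nA^ω`. -/
def catInf (p : W A n) (u : Winf A n) : Winf A n :=
  fun i k => if h : k < (p i).length then (p i).get ⟨k, h⟩ else u i (k - (p i).length)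

/-- `v` is an interior vertex of the `P`-dag: a strict initial factor of
some element of `P`. -/
def Interior (P : Set (W A n)) (v : W A n) : Prop := ∃ p ∈ P, initLE v p ∧ v ≠ p

/-- The child of `v` in direction `i`, extended by letter `a`. -/
def child (v : W A n) (i : Fin n) (a : A) : W A n := Function.update v i (v i ++ [a])

/-- A leaf of the interior dag of `P`: an interior vertex none of whose
children is interior. -/
def InteriorLeaf (P : Set (W A n)) (v : W A n) : Prop :=
  Interior P v ∧ ∀ (i : Fin n) (a : A), ¬ Interior P (child v i a)

/-- `v_+ = (v · A_{ε,n}) ∩ P`, the set of children of `v` belonging to `P`. -/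
def vplus (P : Set (W A n)) (v : W A n) : Set (W A n) :=
  {w | (∃ (i : Fin n) (a : A), w = child v i a) ∧ w ∈ P}

/-- The depth of a vertex: the sum of the coordinate lengths. -/
def depth (v : W A n) : ℕ := ∑ i, (v i).length

/-- One-step restriction of `P` at `(p, i)`. -/
def oneStep (P : Set (W A n)) (p : W A n) (i : Fin n) : Set (W A n) :=
  (P \ {p}) ∪ {w | ∃ a : A, w = child p i a}

/-- One step in a sequence of one-step restrictions. -/
def RestrStep (P Q : Set (W A n)) : Prop := ∃ p ∈ P, ∃ i : Fin n, Q = oneStep P p i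

/-- The box code `A^{k_1} × … × A^{k_n}`. -/
def box (A : Type*) {n : ℕ} (k : Fin n → ℕ) : Set (W A n) :=
  {w | ∀ i : Fin n, (w i).length = k i}

/-- Elementwise join `P ∨ Q` of two sets, ranging over the joins that exist. -/
def setJoin (P Q : Set (W A n)) : Set (W A n) :=
  {w | ∃ p ∈ P, ∃ q ∈ Q, isJoin p q w}

/-- `ℓ(S)`: the maximum coordinate length occurring in `S`. -/
noncomputable def ell (S : Set (W A n)) : ℕ :=
  sSup {m | ∃ z ∈ S, ∃ i : Fin n, (z i).length = m}

/-- An element of `n RI^fin_A`: an injective right ideal morphism of `nA*`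
whose domain code and image code are finite maximal joinless codes.
`toFun` is a total function whose values outside `Dom` are irrelevant. -/
structure RIMfin (A : Type*) (n : ℕ) where
  Dom : Set (W A n)
  toFun : W A n → W A n
  domC : Set (W A n)
  imC : Set (W A n)
  ideal : IsRightIdeal Dom
  morph : ∀ x ∈ Dom, ∀ w : W A n, toFun (cat x w) = cat (toFun x) w
  inj : Set.InjOn toFun Dom
  domC_gen : genIdeal domC = Dom
  imC_gen : genIdeal imC = toFun '' Dom
  domC_fin : domC.Finite
  domC_max : MaxJoinlessCode domC
  imC_fin : imC.Finite
  imC_max : MaxJoinlessCode imC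

/-- `ℓ(f) = max{ℓ(z) : z ∈ domC(f) ∪ imC(f)}`. -/
noncomputable def ellF (F : RIMfin A n) : ℕ := ell (F.domC ∪ F.imC)

/-- `G` extends `F` (as partial functions). -/
def Extends (F G : RIMfin A n) : Prop :=
  F.Dom ⊆ G.Dom ∧ ∀ x ∈ F.Dom, G.toFun x = F.toFun x

/-- `F` and `G` are equal as partial functions. -/
def EquivRIM (F G : RIMfin A n) : Prop :=
  F.Dom = G.Dom ∧ ∀ x ∈ F.Dom, F.toFun x = G.toFun x

/-- `G` is a maximal extension of `F` in `n RI^fin_A`. -/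
def MaxExtension (F G : RIMfin A n) : Prop :=
  Extends F G ∧ ∀ H : RIMfin A n, Extends G H → EquivRIM G H


/-!
A finite code has bounded coordinate lengths `L`; truncating an infinite tuple `w` to length `L`
in every coordinate gives a finite tuple that, by maximality, has a join with some `p ∈ P`, and
then `p` must already be an initial factor of that truncation, hence of `w`. Conversely, any
`x ∈ nA*` extends to an infinite tuple `w`, which has an initial factor `p ∈ P`, and two initial
factors of one infinite tuple have a join. Equivalence with essentiality is the observation that
`x·nA* ∩ P·nA*` is nonempty exactly when `x` has a join with some `p ∈ P`.
-/

lemma initLE_iff_forall_prefix {u v : W A n} : initLE u v ↔ ∀ i, u i <+: v i := by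
  constructor
  · rintro ⟨x, rfl⟩ i
    exact ⟨x i, rfl⟩
  · intro h
    refine ⟨fun i => (v i).drop (u i).length, funext fun i => ?_⟩
    obtain ⟨t, ht⟩ := h i
    show v i = u i ++ (v i).drop (u i).length
    rw [← ht, List.drop_left]

lemma initLE_of_initLE_of_length_le {u v z : W A n} (hu : initLE u z) (hv : initLE v z)
    (hlen : ∀ i, (u i).length ≤ (v i).length) : initLE u v := by
  rw [initLE_iff_forall_prefix] at hu hv ⊢
  exact fun i => List.prefix_of_prefix_length_le (hu i) (hv i) (hlen i)

/-- In `nA*` a common upper bound suffices for a join: take the coordinatewise longer prefix. -/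
lemma hasJoin_iff_exists_upperBound {u v : W A n} :
    HasJoin u v ↔ ∃ z, initLE u z ∧ initLE v z := by
  refine ⟨fun ⟨z, hu, hv, _⟩ => ⟨z, hu, hv⟩, fun ⟨z, hu, hv⟩ => ?_⟩
  rw [initLE_iff_forall_prefix] at hu hv
  refine ⟨fun i => (z i).take (max (u i).length (v i).length), ?_, ?_, ?_⟩
  · rw [initLE_iff_forall_prefix]
    intro i
    nth_rw 1 [List.prefix_iff_eq_take.mp (hu i)]
    exact List.take_prefix_take_left (le_max_left _ _)
  · rw [initLE_iff_forall_prefix]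
    intro i
    nth_rw 1 [List.prefix_iff_eq_take.mp (hv i)]
    exact List.take_prefix_take_left (le_max_right _ _)
  · intro y hyu hyv
    rw [initLE_iff_forall_prefix] at hyu hyv ⊢
    intro i
    rcases le_total (u i).length (v i).length with h | h
    · rw [Nat.max_eq_right h, ← List.prefix_iff_eq_take.mp (hv i)]
      exact hyv i
    · rw [Nat.max_eq_left h, ← List.prefix_iff_eq_take.mp (hu i)]
      exact hyu i

lemma genIdeal_singleton_inter_nonempty_iff {x : W A n} {P : Set (W A n)} :
    (genIdeal {x} ∩ genIdeal P).Nonempty ↔ ∃ p ∈ P, HasJoin x p := by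
  simp only [hasJoin_iff_exists_upperBound]
  constructor
  · rintro ⟨z, ⟨_, rfl, s, hs⟩, p, hp, t, ht⟩
    exact ⟨p, hp, z, ⟨s, hs⟩, ⟨t, ht⟩⟩
  · rintro ⟨p, hp, z, ⟨s, hs⟩, ⟨t, ht⟩⟩
    exact ⟨z, ⟨x, rfl, s, hs⟩, p, hp, t, ht⟩

lemma maxJoinlessCode_iff_forall_genIdeal_inter_nonempty {P : Set (W A n)}
    (hP : JoinlessCode P) :
    MaxJoinlessCode P ↔ ∀ x : W A n, (genIdeal {x} ∩ genIdeal P).Nonempty := by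
  simp only [genIdeal_singleton_inter_nonempty_iff, MaxJoinlessCode, hP, true_and]

lemma subset_genIdeal (C : Set (W A n)) : C ⊆ genIdeal C :=
  fun c hc => ⟨c, hc, epsn A n, funext fun _ => (List.append_nil _).symm⟩

lemma exists_length_le_of_finite {P : Set (W A n)} (hP : P.Finite) :
    ∃ L : ℕ, ∀ p ∈ P, ∀ i, (p i).length ≤ L := by
  obtain ⟨L, hL⟩ := (hP.image depth).bddAbove
  refine ⟨L, fun p hp i => le_trans ?_ (hL (Set.mem_image_of_mem _ hp))⟩
  exact Finset.single_le_sum (f := fun j => (p j).length)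
    (fun _ _ => Nat.zero_le _) (Finset.mem_univ i)

lemma catInf_cat (p s : W A n) (u : Winf A n) :
    catInf (cat p s) u = catInf p (catInf s u) := by
  funext i k
  simp only [catInf, cat, List.length_append, List.get_eq_getElem]
  by_cases hp : k < (p i).length
  · simp [hp, List.getElem_append_left hp, show k < (p i).length + (s i).length by omega]
  · by_cases hs : k < (p i).length + (s i).length
    · simp [hp, hs, List.getElem_append_right (Nat.le_of_not_lt hp),
        show k - (p i).length < (s i).length by omega]
    · simp [hp, hs, show ¬ k - (p i).length < (s i).length by omega, Nat.sub_add_eq]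

lemma exists_catInf_of_initLE {p q : W A n} {w : Winf A n} (hpq : initLE p q)
    (hq : ∃ u, w = catInf q u) : ∃ u, w = catInf p u := by
  obtain ⟨s, rfl⟩ := hpq
  obtain ⟨u, rfl⟩ := hq
  exact ⟨catInf s u, catInf_cat p s u⟩

def truncate (w : Winf A n) (m : Fin n → ℕ) : W A n :=
  fun i => List.ofFn fun k : Fin (m i) => w i k

lemma exists_catInf_iff_eq_truncate {p : W A n} {w : Winf A n} :
    (∃ u, w = catInf p u) ↔ p = truncate w fun i => (p i).length := by
  constructor
  · rintro ⟨u, rfl⟩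
    funext i
    refine List.ext_getElem (by simp [truncate]) fun k _ _ => ?_
    simp [truncate, catInf]
  · intro h
    refine ⟨fun i k => w i (k + (p i).length), funext fun i => funext fun k => ?_⟩
    by_cases hk : k < (p i).length
    · rw [h]
      simp [catInf, truncate, hk]
    · simp only [catInf, dif_neg hk]
      congr 1
      omega

lemma exists_catInf_truncate (w : Winf A n) (m : Fin n → ℕ) :
    ∃ u, w = catInf (truncate w m) u := by
  rw [exists_catInf_iff_eq_truncate]
  simp [truncate]

lemma truncate_initLE_truncate (w : Winf A n) {m m' : Fin n → ℕ} (h : m ≤ m') :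
    initLE (truncate w m) (truncate w m') := by
  rw [initLE_iff_forall_prefix]
  intro i
  rw [List.prefix_iff_eq_take]
  refine List.ext_getElem (by simp [truncate, h i]) fun k hk _ => ?_
  simp [truncate]

lemma hasJoin_of_exists_catInf {p q : W A n} {w : Winf A n} (hp : ∃ u, w = catInf p u)
    (hq : ∃ u, w = catInf q u) : HasJoin p q := by
  rw [exists_catInf_iff_eq_truncate] at hp hq
  rw [hasJoin_iff_exists_upperBound, hp, hq]
  exact ⟨truncate w fun i => max (p i).length (q i).length,
    truncate_initLE_truncate w fun i => le_max_left _ _,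
    truncate_initLE_truncate w fun i => le_max_right _ _⟩

lemma MaxJoinlessCode.exists_catInf {P : Set (W A n)} (hP : MaxJoinlessCode P)
    (hfin : P.Finite) (w : Winf A n) : ∃ p ∈ P, ∃ u, w = catInf p u := by
  obtain ⟨L, hL⟩ := exists_length_le_of_finite hfin
  obtain ⟨p, hp, hjoin⟩ := hP.2 (truncate w fun _ => L)
  obtain ⟨z, hxz, hpz⟩ := hasJoin_iff_exists_upperBound.mp hjoin
  have hpx : initLE p (truncate w fun _ => L) :=
    initLE_of_initLE_of_length_le hpz hxz fun i => by simpa [truncate] using hL p hp i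
  exact ⟨p, hp, exists_catInf_of_initLE hpx (exists_catInf_truncate w _)⟩

lemma maxJoinlessCode_of_forall_exists_catInf [Nonempty A] {P : Set (W A n)}
    (hP : JoinlessCode P) (hcover : ∀ w : Winf A n, ∃ p ∈ P, ∃ u, w = catInf p u) :
    MaxJoinlessCode P := by
  refine ⟨hP, fun x => ?_⟩
  let w := catInf x fun _ _ => Classical.arbitrary A
  obtain ⟨p, hp, hpw⟩ := hcover w
  exact ⟨p, hp, hasJoin_of_exists_catInf ⟨_, rfl⟩ hpw⟩

theorem joinless_essential_tfae_general {A : Type*} [Nonempty A]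
    {n : ℕ} (P : Set (W A n)) (hfin : P.Finite)
    (hjl : JoinlessCode P) :
    List.TFAE
      [∀ x : W A n, (genIdeal {x} ∩ genIdeal P).Nonempty,
       MaxJoinlessCode P,
       ∀ w : Winf A n, ∃ p ∈ P, ∃ u : Winf A n, w = catInf p u,
       ∀ w : Winf A n, ∃ r ∈ genIdeal P, ∃ u : Winf A n, w = catInf r u] := by
  tfae_have 1 ↔ 2 := (maxJoinlessCode_iff_forall_genIdeal_inter_nonempty hjl).symm
  tfae_have 2 → 3 := fun hmax => hmax.exists_catInf hfin
  tfae_have 3 → 2 := maxJoinlessCode_of_forall_exists_catInf hjl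
  tfae_have 3 → 4 := fun h w => by
    obtain ⟨p, hp, hw⟩ := h w
    exact ⟨p, subset_genIdeal P hp, hw⟩
  tfae_have 4 → 3 := fun h w => by
    obtain ⟨_, ⟨p, hp, s, rfl⟩, hw⟩ := h w
    exact ⟨p, hp, exists_catInf_of_initLE ⟨s, rfl⟩ hw⟩
  tfae_finish

/-- For a finite joinless code `P` generating the right ideal `R = P·nA*`,
the following are equivalent: (1) `R` is essential; (2) `P` is a maximal
joinless code; (3) `P·nA^ω = nA^ω`; (4) `R·nA^ω = nA^ω`. -/
theorem joinless_essential_tfae {A : Type*} [Fintype A] [Nonempty A]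
    {n : ℕ} (hn : 1 ≤ n) (P : Set (W A n)) (hfin : P.Finite)
    (hjl : JoinlessCode P) :
    List.TFAE
      [∀ x : W A n, (genIdeal {x} ∩ genIdeal P).Nonempty,
       MaxJoinlessCode P,
       ∀ w : Winf A n, ∃ p ∈ P, ∃ u : Winf A n, w = catInf p u,
       ∀ w : Winf A n, ∃ r ∈ genIdeal P, ∃ u : Winf A n, w = catInf r u] :=
  joinless_essential_tfae_general P hfin hjl

end BrinThompson
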